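/- arXiv:2511.01084 — 10 statements merged into one kernel-verified Lean document; each statement's English description precedes it below -/
import Mathlib

section
/- Let p > 2 and c > 0. Set S = √(1 + c² + 2c·cos(2π/p)) and R = 2c·cos(π/p)/(c − 1 + S). Then ((1 + c + S)/2)·(sin(π/p))^{-2}·(1 + R² − 2R·cos(π/p)) = c + R². Consequently, with A = 2^{-p/2}·((1 + c + S)·(sin(π/p))^{-2})^{p/2}, one has A·((1 + R² + 2R·cos(π − π/p))/(2R))^{p/2} = ((c + R²)/(2R))^{p/2}, i.e. equality holds in the inequality of Theorem 1.3 at t = π − π/p and r = R (where the correction term B·h_p(π − π/p) vanishes since h_p(π − π/p) = 0). -/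
/-!
Write `x = cos (π / p)`, so that `S ^ 2 = (c - 1) ^ 2 + 4 c x ^ 2` and `S > |c - 1|`. Then
`1 + R ^ 2 - 2 R x = S (1 + c - S) / (c - 1 + S)` and `c + R ^ 2 = 2 c S / (c - 1 + S)`, so the
first claim reduces to `(1 + c + S) (1 + c - S) = 4 c (1 - x ^ 2) = 4 c sin (π / p) ^ 2`.
Since `cos (π - π / p) = -x`, the second claim follows by dividing the first by `2 R` and
raising it to the power `p / 2`.
-/

open Real

theorem one_add_sq_add_mul_cos_two_mul (c θ : ℝ) :
    1 + c ^ 2 + 2 * c * cos (2 * θ) = (c - 1) ^ 2 + 4 * c * cos θ ^ 2 := by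
  rw [cos_two_mul]
  ring

section

variable {c x S R : ℝ}

theorem sub_one_add_pos_of_sq_eq (hc : 0 < c) (hx : x ≠ 0) (hS₀ : 0 ≤ S)
    (hS : S ^ 2 = (c - 1) ^ 2 + 4 * c * x ^ 2) : 0 < c - 1 + S := by
  have : |c - 1| < S :=
    abs_lt_of_sq_lt_sq (by rw [hS]; have := sq_pos_of_ne_zero hx; nlinarith) hS₀
  linarith [neg_abs_le (c - 1)]

theorem one_add_add_mul_one_add_sq_sub_mul_eq (hS : S ^ 2 = (c - 1) ^ 2 + 4 * c * x ^ 2)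
    (hD : c - 1 + S ≠ 0) (hR : R = 2 * c * x / (c - 1 + S)) :
    (1 + c + S) * (1 + R ^ 2 - 2 * R * x) = 2 * (1 - x ^ 2) * (c + R ^ 2) := by
  subst hR
  field_simp
  linear_combination (S + c - 1 - 2 * c * x ^ 2) * hS

end

theorem rpow_neg_mul_rpow_mul_rpow {a b y : ℝ} (ha : 0 ≤ a) (hb : 0 ≤ b) (hy : 0 ≤ y) (q : ℝ) :
    b ^ (-q) * a ^ q * y ^ q = (a / b * y) ^ q := by
  rw [mul_rpow (div_nonneg ha hb) hy, div_rpow ha hb, rpow_neg hb, inv_mul_eq_div]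

/-- The equality case of Theorem 1.3: at `t = π - π/p` and `r = R` the main
inequality becomes an equality. -/
theorem equality_case_main_inequality
    (p c : ℝ) (hp : 2 < p) (hc : 0 < c)
    (S R A : ℝ)
    (hS : S = Real.sqrt (1 + c ^ 2 + 2 * c * Real.cos (2 * π / p)))
    (hR : R = 2 * c * Real.cos (π / p) / (c - 1 + S))
    (hA : A = (2 : ℝ) ^ (-(p / 2)) *
      ((1 + c + S) * (Real.sin (π / p)) ^ (-(2 : ℝ))) ^ (p / 2)) :
    ((1 + c + S) / 2) * (Real.sin (π / p)) ^ (-(2 : ℝ)) *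
        (1 + R ^ 2 - 2 * R * Real.cos (π / p)) = c + R ^ 2 ∧
    A * ((1 + R ^ 2 + 2 * R * Real.cos (π - π / p)) / (2 * R)) ^ (p / 2) =
      ((c + R ^ 2) / (2 * R)) ^ (p / 2) := by
  have hθ₀ : 0 < π / p := div_pos pi_pos (by linarith)
  have hθ : π / p < π / 2 := div_lt_div_of_pos_left pi_pos two_pos hp
  have hx : 0 < cos (π / p) := cos_pos_of_mem_Ioo ⟨by linarith [pi_pos], hθ⟩
  have hsin : 0 < sin (π / p) := sin_pos_of_pos_of_lt_pi hθ₀ (by linarith [pi_pos])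
  have hS₀ : 0 ≤ S := hS ▸ sqrt_nonneg _
  have hS_sq : S ^ 2 = (c - 1) ^ 2 + 4 * c * cos (π / p) ^ 2 := by
    rw [hS, mul_div_assoc, one_add_sq_add_mul_cos_two_mul, sq_sqrt (by positivity)]
  have hD := sub_one_add_pos_of_sq_eq hc hx.ne' hS₀ hS_sq
  have hkey := one_add_add_mul_one_add_sq_sub_mul_eq hS_sq hD.ne' hR
  have h₁ : ((1 + c + S) / 2) * sin (π / p) ^ (-(2 : ℝ)) *
      (1 + R ^ 2 - 2 * R * cos (π / p)) = c + R ^ 2 := by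
    rw [rpow_neg hsin.le, rpow_two, sin_sq]
    field_simp [(sin_sq (π / p)).symm.trans_ne (pow_pos hsin 2).ne']
    linear_combination hkey
  refine ⟨h₁, ?_⟩
  have hR₀ : 0 ≤ R := hR ▸ by positivity
  have hX : 0 ≤ 1 + R ^ 2 - 2 * R * cos (π / p) := by
    nlinarith [sq_nonneg (R - cos (π / p)), sin_sq_add_cos_sq (π / p)]
  rw [hA, cos_pi_sub, rpow_neg_mul_rpow_mul_rpow
    (mul_nonneg (by linarith) (rpow_nonneg hsin.le _)) two_pos.le
    (div_nonneg (by linarith) (by positivity)), ← h₁]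
  congr 1
  ring
end

section
/- Let p ≥ 2 and set q = π/p. Then for every x ∈ [0, π], cos q − cos x + (2/p)·cos(p·x/2)·sin q − (cos(p·x/2))²·(cos q + (2/p)·sin q − 1) ≥ 0. -/
open Real Set

/-!
Put `a = 2 / p ∈ (0, 1]` and `θ = p x / 2`, so that `x = a θ`, `q = a π / 2` and `θ ∈ [0, π / a]`.
Let `K = cos q + a sin q - 1` be the coefficient of `cos² θ`.

* On `[π, π / a]` the bounds `cos (a θ) ≤ cos (2 q)` and Jordan's `a ≤ sin q` suffice.
* On `[π / 2, π]`, with `θ = π / 2 + s`, concavity of `sin` gives `a sin s ≤ sin (a s)` and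
  `a² (1 - cos s) ≤ 1 - cos (a s)`, which reduce the claim to `0 ≤ 2 K ≤ a² cos q`. In the
  half angle `t = q / 2 ∈ [0, π / 4]` these are the concave-function bounds `tan t ≤ 4 t / π` and
  `2 t (cos t + sin t) ≤ π sin t`.
* On `[0, π / 2]` the function vanishes at both ends, and its derivative is
  `sin 2θ (K - a M θ)` with `M θ = (sin q sin θ - sin (a θ)) / sin 2θ` increasing, so it first
  increases and then decreases. That `M` increases follows by the same sign-change argument applied
  to the numerator of `M'`, whose derivative is a positive multiple of
  `3 sin q / (4 - a²) - sin (a θ) / sin θ`, and `sin (a θ) / sin θ` is increasing.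
-/

theorem nonneg_of_hasDerivAt2_nonpos {f f' f'' : ℝ → ℝ} {a b x : ℝ}
    (hf : ∀ y, HasDerivAt f (f' y) y) (hf' : ∀ y, HasDerivAt f' (f'' y) y)
    (hf'' : ∀ y ∈ Ioo a b, f'' y ≤ 0) (ha : f a = 0) (hb : f b = 0) (hx : x ∈ Icc a b) :
    0 ≤ f x := by
  have hab : a ≤ b := hx.1.trans hx.2
  have hconc : ConcaveOn ℝ (Icc a b) f :=
    concaveOn_of_hasDerivWithinAt2_nonpos (convex_Icc a b)
      (fun y _ => (hf y).continuousAt.continuousWithinAt)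
      (fun y _ => (hf y).hasDerivWithinAt) (fun y _ => (hf' y).hasDerivWithinAt)
      (by simpa only [interior_Icc] using hf'')
  simpa [ha, hb] using hconc.min_le_of_mem_Icc (left_mem_Icc.2 hab) (right_mem_Icc.2 hab) hx

theorem min_le_of_hasDerivAt_eq_mul_sub {f g r : ℝ → ℝ} {a b c x : ℝ}
    (hf : ContinuousOn f (Icc a b)) (hf' : ∀ y ∈ Ioo a b, HasDerivAt f (g y * (c - r y)) y)
    (hg : ∀ y ∈ Ioo a b, 0 ≤ g y) (hr : MonotoneOn r (Ioo a b)) (hx : x ∈ Icc a b) :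
    min (f a) (f b) ≤ f x := by
  obtain ⟨hax, hxb⟩ := hx
  by_cases hrc : ∀ y ∈ Ioo a x, r y ≤ c
  · have hmono : MonotoneOn f (Icc a x) := by
      refine monotoneOn_of_hasDerivWithinAt_nonneg (f' := fun y => g y * (c - r y))
        (convex_Icc a x)
        (hf.mono (Icc_subset_Icc_right hxb)) (fun y hy => ?_) (fun y hy => ?_) <;>
        rw [interior_Icc] at hy
      · exact (hf' y ⟨hy.1, hy.2.trans_le hxb⟩).hasDerivWithinAt
      · exact mul_nonneg (hg y ⟨hy.1, hy.2.trans_le hxb⟩) (sub_nonneg.2 (hrc y hy))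
    exact (min_le_left _ _).trans (hmono (left_mem_Icc.2 hax) (right_mem_Icc.2 hax) hax)
  · push Not at hrc
    obtain ⟨y, hy, hcy⟩ := hrc
    have hanti : AntitoneOn f (Icc x b) := by
      refine antitoneOn_of_hasDerivWithinAt_nonpos (f' := fun y => g y * (c - r y))
        (convex_Icc x b)
        (hf.mono (Icc_subset_Icc_left hax)) (fun z hz => ?_) (fun z hz => ?_) <;>
        rw [interior_Icc] at hz
      · exact (hf' z ⟨hax.trans_lt hz.1, hz.2⟩).hasDerivWithinAt
      · have hz' : z ∈ Ioo a b := ⟨hax.trans_lt hz.1, hz.2⟩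
        have hyz : r y ≤ r z := hr ⟨hy.1, hy.2.trans (hz.1.trans hz.2)⟩ hz' (hy.2.trans hz.1).le
        exact mul_nonpos_of_nonneg_of_nonpos (hg z hz') (by linarith)
    exact (min_le_right _ _).trans (hanti (left_mem_Icc.2 hxb) (right_mem_Icc.2 hxb) hxb)

theorem mul_sin_le_sin_mul {l y : ℝ} (hl0 : 0 ≤ l) (hl1 : l ≤ 1) (hy0 : 0 ≤ y) (hy : y ≤ π) :
    l * sin y ≤ sin (l * y) := by
  simpa using strictConcaveOn_sin_Icc.concaveOn.2 ⟨le_rfl, pi_pos.le⟩ ⟨hy0, hy⟩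
    (sub_nonneg.2 hl1) hl0 (sub_add_cancel 1 l)

theorem sq_mul_one_sub_cos_le {a s : ℝ} (ha0 : 0 ≤ a) (ha1 : a ≤ 1) (hs0 : 0 ≤ s)
    (hs : s ≤ 2 * π) : a ^ 2 * (1 - cos s) ≤ 1 - cos (a * s) := by
  have one_sub_cos_two_mul : ∀ u, 1 - cos (2 * u) = 2 * sin u ^ 2 := fun u => by
    rw [cos_two_mul, cos_sq']; ring
  have hchord := mul_sin_le_sin_mul ha0 ha1 (by linarith : 0 ≤ s / 2) (by linarith)
  have hsin : 0 ≤ sin (s / 2) := sin_nonneg_of_nonneg_of_le_pi (by linarith) (by linarith)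
  rw [show s = 2 * (s / 2) by ring, show a * (2 * (s / 2)) = 2 * (a * (s / 2)) by ring,
    one_sub_cos_two_mul, one_sub_cos_two_mul]
  nlinarith [mul_nonneg ha0 hsin]

theorem sin_le_mul_mul_cos {t : ℝ} (ht0 : 0 ≤ t) (ht : t ≤ π / 4) :
    sin t ≤ 4 / π * t * cos t := by
  have hu (y : ℝ) : HasDerivAt (fun t => 4 / π * t * cos t - sin t)
      (4 / π * cos y - 4 / π * y * sin y - cos y) y := by
    refine ((((hasDerivAt_id' y).const_mul (4 / π)).mul (hasDerivAt_cos y)).sub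
      (hasDerivAt_sin y)).congr_deriv ?_
    ring
  have hu' (y : ℝ) : HasDerivAt (fun t => 4 / π * cos t - 4 / π * t * sin t - cos t)
      ((1 - 8 / π) * sin y - 4 / π * y * cos y) y := by
    refine ((((hasDerivAt_cos y).const_mul (4 / π)).sub
      (((hasDerivAt_id' y).const_mul (4 / π)).mul (hasDerivAt_sin y))).sub
      (hasDerivAt_cos y)).congr_deriv ?_
    ring
  have hu'' : ∀ y ∈ Ioo 0 (π / 4), (1 - 8 / π) * sin y - 4 / π * y * cos y ≤ 0 := by
    rintro y ⟨hy0, hy⟩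
    have hsin : 0 ≤ sin y := sin_nonneg_of_nonneg_of_le_pi hy0.le (by linarith [pi_pos])
    have hcos : 0 ≤ cos y := cos_nonneg_of_mem_Icc ⟨by linarith [pi_pos], by linarith [pi_pos]⟩
    have h8 : 1 - 8 / π ≤ 0 := by
      rw [sub_nonpos, le_div_iff₀ pi_pos]; linarith [pi_le_four]
    have : 0 ≤ 4 / π * y * cos y := by have := pi_pos; positivity
    nlinarith
  have := nonneg_of_hasDerivAt2_nonpos hu hu' hu'' (by simp)
    (by simp [cos_pi_div_four, sin_pi_div_four]) ⟨ht0, ht⟩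
  linarith

theorem two_mul_mul_cos_add_sin_le {t : ℝ} (ht0 : 0 ≤ t) (ht : t ≤ π / 4) :
    2 * t * (cos t + sin t) ≤ π * sin t := by
  have hw (y : ℝ) : HasDerivAt (fun t => π * sin t - 2 * t * (cos t + sin t))
      (π * cos y - 2 * (cos y + sin y) - 2 * y * (cos y - sin y)) y := by
    refine (((hasDerivAt_sin y).const_mul π).sub (((hasDerivAt_id' y).const_mul 2).mul
      ((hasDerivAt_cos y).add (hasDerivAt_sin y)))).congr_deriv ?_
    simp only [Pi.add_apply]
    ring
  have hw' (y : ℝ) : HasDerivAt (fun t => π * cos t - 2 * (cos t + sin t) - 2 * t * (cos t - sin t))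
      ((4 - π + 2 * y) * sin y + (2 * y - 4) * cos y) y := by
    refine ((((hasDerivAt_cos y).const_mul π).sub
      (((hasDerivAt_cos y).add (hasDerivAt_sin y)).const_mul 2)).sub
      (((hasDerivAt_id' y).const_mul 2).mul
        ((hasDerivAt_cos y).sub (hasDerivAt_sin y)))).congr_deriv ?_
    simp only [Pi.sub_apply]
    ring
  have hw'' : ∀ y ∈ Ioo 0 (π / 4), (4 - π + 2 * y) * sin y + (2 * y - 4) * cos y ≤ 0 := by
    rintro y ⟨hy0, hy⟩
    have hπ := pi_pos
    have hcos : 0 ≤ cos y := cos_nonneg_of_mem_Icc ⟨by linarith, by linarith⟩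
    have htan := mul_le_mul_of_nonneg_left (sin_le_mul_mul_cos hy0.le hy.le)
      (by linarith [pi_le_four] : 0 ≤ 4 - π + 2 * y)
    -- the bound `tan y ≤ 4 y / π` turns the claim into a quadratic in `y` vanishing at `π / 4`
    have hquad : (4 - π + 2 * y) * (4 / π * y) + (2 * y - 4) =
        (y - π / 4) * (8 / π * y + 16 / π) := by
      field_simp; ring
    have : (y - π / 4) * (8 / π * y + 16 / π) ≤ 0 :=
      mul_nonpos_of_nonpos_of_nonneg (by linarith) (by positivity)
    nlinarith
  have := nonneg_of_hasDerivAt2_nonpos hw hw' hw'' (by simp)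
    (by simp [cos_pi_div_four, sin_pi_div_four]; ring) ⟨ht0, ht⟩
  linarith

theorem sin_mul_mul_cos_le {a θ : ℝ} (ha0 : 0 ≤ a) (ha1 : a ≤ 1) (hθ0 : 0 ≤ θ) (hθ : θ ≤ π / 2) :
    sin (a * θ) * cos θ ≤ a * cos (a * θ) * sin θ := by
  have h1a : 0 < 1 + a := by linarith
  -- product-to-sum, then the chord bound for `sin` with ratio `(1 - a) / (1 + a)`
  have hsum : 2 * (a * cos (a * θ) * sin θ - sin (a * θ) * cos θ) =
      (1 + a) * sin ((1 - a) * θ) - (1 - a) * sin ((1 + a) * θ) := by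
    rw [show (1 - a) * θ = θ - a * θ by ring, show (1 + a) * θ = θ + a * θ by ring,
      sin_sub, sin_add]
    ring
  have hchord := mul_sin_le_sin_mul (l := (1 - a) / (1 + a)) (y := (1 + a) * θ)
    (div_nonneg (by linarith) h1a.le) ((div_le_one h1a).2 (by linarith)) (by positivity)
    (by nlinarith)
  rw [show (1 - a) / (1 + a) * ((1 + a) * θ) = (1 - a) * θ by field_simp,
    div_mul_eq_mul_div, div_le_iff₀' h1a] at hchord
  linarith

theorem monotoneOn_sin_mul_div_sin {a : ℝ} (ha0 : 0 ≤ a) (ha1 : a ≤ 1) :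
    MonotoneOn (fun θ => sin (a * θ) / sin θ) (Ioo 0 (π / 2)) := by
  have hsin : ∀ θ ∈ Ioo 0 (π / 2), sin θ ≠ 0 := fun θ hθ =>
    (sin_pos_of_pos_of_lt_pi hθ.1 (by linarith [hθ.2, pi_pos])).ne'
  refine monotoneOn_of_hasDerivWithinAt_nonneg (convex_Ioo 0 (π / 2))
    (f' := fun θ => (cos (a * θ) * (a * 1) * sin θ - sin (a * θ) * cos θ) / sin θ ^ 2)
    (ContinuousOn.div (by fun_prop) (by fun_prop) hsin) (fun θ hθ => ?_) (fun θ hθ => ?_) <;>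
    rw [interior_Ioo] at hθ
  · exact (((hasDerivAt_id' θ).const_mul a).sin.div (hasDerivAt_sin θ)
      (hsin θ hθ)).hasDerivWithinAt
  · have := sin_mul_mul_cos_le ha0 ha1 hθ.1.le hθ.2.le
    exact div_nonneg (by linarith) (sq_nonneg _)

namespace KeyScalarInequality

-- In the paper's variables, `a = 2 / p`, `a * (π / 2) = q` and `θ = p * x / 2`.
noncomputable def K (a : ℝ) : ℝ := cos (a * (π / 2)) + a * sin (a * (π / 2)) - 1

noncomputable def F (a θ : ℝ) : ℝ :=
  cos (a * (π / 2)) - cos (a * θ) + a * cos θ * sin (a * (π / 2)) - cos θ ^ 2 * K a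

theorem K_eq (a : ℝ) :
    K a = 2 * sin (a * (π / 4)) * (a * cos (a * (π / 4)) - sin (a * (π / 4))) := by
  rw [K, show a * (π / 2) = 2 * (a * (π / 4)) by ring, cos_two_mul, sin_two_mul, cos_sq']
  ring

theorem K_nonneg {a : ℝ} (ha0 : 0 ≤ a) (ha1 : a ≤ 1) : 0 ≤ K a := by
  have hπ := pi_pos
  have htan := sin_le_mul_mul_cos (t := a * (π / 4)) (by positivity) (by nlinarith)
  rw [show 4 / π * (a * (π / 4)) = a by field_simp] at htan
  have hsin : 0 ≤ sin (a * (π / 4)) := sin_nonneg_of_nonneg_of_le_pi (by positivity) (by nlinarith)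
  rw [K_eq]
  exact mul_nonneg (by positivity) (by linarith)

theorem two_mul_K_le {a : ℝ} (ha0 : 0 ≤ a) (ha1 : a ≤ 1) :
    2 * K a ≤ a ^ 2 * cos (a * (π / 2)) := by
  have hπ := pi_pos
  have ht0 : 0 ≤ a * (π / 4) := by positivity
  have ht : a * (π / 4) ≤ π / 4 := by nlinarith
  have hw := two_mul_mul_cos_add_sin_le ht0 ht
  have hsin : 0 ≤ sin (a * (π / 4)) := sin_nonneg_of_nonneg_of_le_pi ht0 (by linarith)
  rw [show 2 * (a * (π / 4)) = π / 2 * a by ring] at hw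
  set t := a * (π / 4)
  have hcs : a * (cos t + sin t) - 2 * sin t ≤ 0 := by
    have : π * (a * (cos t + sin t) - 2 * sin t) ≤ π * 0 := by linarith
    exact le_of_mul_le_mul_left this hπ
  have hcos : cos (a * (π / 2)) = cos t ^ 2 - sin t ^ 2 := by
    rw [show a * (π / 2) = 2 * t by ring, cos_two_mul']
  -- `a² cos (2t) - 2 K a` factors as a product of two nonpositive terms
  rw [K_eq, hcos]
  have hcs' : a * (cos t - sin t) - 2 * sin t ≤ 0 := by nlinarith
  nlinarith [mul_nonneg_of_nonpos_of_nonpos hcs hcs']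

theorem wronskian_nonneg {a θ : ℝ} (ha0 : 0 ≤ a) (ha1 : a ≤ 1) (hθ : θ ∈ Icc 0 (π / 2)) :
    0 ≤ (sin (a * (π / 2)) * cos θ - a * cos (a * θ)) * sin (2 * θ)
      - 2 * (sin (a * (π / 2)) * sin θ - sin (a * θ)) * cos (2 * θ) := by
  set S := sin (a * (π / 2))
  have h4a : 0 < 4 - a ^ 2 := by nlinarith
  have hN (y : ℝ) : HasDerivAt (fun θ => (S * cos θ - a * cos (a * θ)) * sin (2 * θ)
        - 2 * (S * sin θ - sin (a * θ)) * cos (2 * θ))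
      (sin (2 * y) * (3 * S * sin y - (4 - a ^ 2) * sin (a * y))) y := by
    refine (((((hasDerivAt_cos y).const_mul S).sub
      (((hasDerivAt_id' y).const_mul a).cos.const_mul a)).mul
      ((hasDerivAt_id' y).const_mul 2).sin).sub
      (((((hasDerivAt_sin y).const_mul S).sub ((hasDerivAt_id' y).const_mul a).sin).const_mul
      2).mul ((hasDerivAt_id' y).const_mul 2).cos)).congr_deriv ?_
    simp only [Pi.sub_apply]
    ring
  have := min_le_of_hasDerivAt_eq_mul_sub (f := fun θ => (S * cos θ - a * cos (a * θ))
      * sin (2 * θ) - 2 * (S * sin θ - sin (a * θ)) * cos (2 * θ))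
    (g := fun y => sin (2 * y) * ((4 - a ^ 2) * sin y)) (c := 3 * S / (4 - a ^ 2))
    (r := fun y => sin (a * y) / sin y) (Continuous.continuousOn (by fun_prop))
    (fun y hy => ?_) (fun y hy => ?_) (monotoneOn_sin_mul_div_sin ha0 ha1) hθ
  · simpa [show 2 * (π / 2) = π by ring, S] using this
  · have hs : sin y ≠ 0 := (sin_pos_of_pos_of_lt_pi hy.1 (by linarith [hy.2, pi_pos])).ne'
    refine (hN y).congr_deriv ?_
    field_simp
  · have hs := sin_nonneg_of_nonneg_of_le_pi hy.1.le (by linarith [hy.2, pi_pos])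
    have hs2 := sin_nonneg_of_nonneg_of_le_pi (by linarith [hy.1] : 0 ≤ 2 * y) (by linarith [hy.2])
    positivity

theorem monotoneOn_sin_sub_sin_mul_div_sin_two_mul {a : ℝ} (ha0 : 0 ≤ a) (ha1 : a ≤ 1) :
    MonotoneOn (fun θ => (sin (a * (π / 2)) * sin θ - sin (a * θ)) / sin (2 * θ))
      (Ioo 0 (π / 2)) := by
  set S := sin (a * (π / 2))
  have hsin : ∀ θ ∈ Ioo 0 (π / 2), sin (2 * θ) ≠ 0 := fun θ hθ =>
    (sin_pos_of_pos_of_lt_pi (by linarith [hθ.1]) (by linarith [hθ.2])).ne'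
  refine monotoneOn_of_hasDerivWithinAt_nonneg (convex_Ioo 0 (π / 2))
    (f' := fun θ => ((S * cos θ - a * cos (a * θ)) * sin (2 * θ)
      - 2 * (S * sin θ - sin (a * θ)) * cos (2 * θ)) / sin (2 * θ) ^ 2)
    (ContinuousOn.div (by fun_prop) (by fun_prop) hsin) (fun θ hθ => ?_) (fun θ hθ => ?_) <;>
    rw [interior_Ioo] at hθ
  · refine ((((hasDerivAt_sin θ).const_mul S).sub ((hasDerivAt_id' θ).const_mul a).sin).div
      ((hasDerivAt_id' θ).const_mul 2).sin (hsin θ hθ)).hasDerivWithinAt.congr_deriv ?_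
    simp only [Pi.sub_apply]
    ring
  · exact div_nonneg (wronskian_nonneg ha0 ha1 ⟨hθ.1.le, hθ.2.le⟩) (sq_nonneg _)

theorem F_nonneg_of_le_pi_div_two {a θ : ℝ} (ha0 : 0 ≤ a) (ha1 : a ≤ 1)
    (hθ : θ ∈ Icc 0 (π / 2)) : 0 ≤ F a θ := by
  set S := sin (a * (π / 2))
  have hF (y : ℝ) (hy : y ∈ Ioo 0 (π / 2)) : HasDerivAt (F a)
      (sin (2 * y) * (K a - a * ((S * sin y - sin (a * y)) / sin (2 * y)))) y := by
    have hs : sin y ≠ 0 := (sin_pos_of_pos_of_lt_pi hy.1 (by linarith [hy.2, pi_pos])).ne'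
    have hc : cos y ≠ 0 := (cos_pos_of_mem_Ioo ⟨by linarith [hy.1, pi_pos], hy.2⟩).ne'
    refine ((((hasDerivAt_const y _).sub ((hasDerivAt_id' y).const_mul a).cos).add
      (((hasDerivAt_cos y).const_mul a).mul_const S)).sub
      (((hasDerivAt_cos y).pow 2).mul_const (K a))).congr_deriv ?_
    rw [sin_two_mul]
    field_simp
    ring
  have := min_le_of_hasDerivAt_eq_mul_sub (g := fun y => sin (2 * y))
    (r := fun y => a * ((S * sin y - sin (a * y)) / sin (2 * y)))
    (by unfold F; fun_prop) hF (fun y hy => ?_)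
    (fun y hy z hz hyz => mul_le_mul_of_nonneg_left
      (monotoneOn_sin_sub_sin_mul_div_sin_two_mul ha0 ha1 hy hz hyz) ha0) hθ
  · have h0 : F a 0 = 0 := by simp [F, K]; ring
    have hπ : F a (π / 2) = 0 := by simp [F]
    rwa [h0, hπ, min_self] at this
  · exact sin_nonneg_of_nonneg_of_le_pi (by linarith [hy.1]) (by linarith [hy.2])

theorem F_add_pi_div_two_nonneg {a s : ℝ} (ha0 : 0 ≤ a) (ha1 : a ≤ 1) (hs0 : 0 ≤ s)
    (hs : s ≤ π) : 0 ≤ F a (s + π / 2) := by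
  have hπ := pi_pos
  set A := cos (a * (π / 2))
  set S := sin (a * (π / 2))
  have hA : 0 ≤ A := cos_nonneg_of_mem_Icc ⟨by nlinarith, by nlinarith⟩
  have hS : 0 ≤ S := sin_nonneg_of_nonneg_of_le_pi (by positivity) (by nlinarith)
  have hchord := mul_sin_le_sin_mul ha0 ha1 hs0 hs
  have hcos := mul_le_mul_of_nonneg_left (sq_mul_one_sub_cos_le ha0 ha1 hs0 (by linarith)) hA
  have hK := K_nonneg ha0 ha1
  have hK2 := two_mul_K_le ha0 ha1
  have hF : F a (s + π / 2) = A * (1 - cos (a * s)) + S * (sin (a * s) - a * sin s)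
      - K a * sin s ^ 2 := by
    rw [F, cos_add_pi_div_two, show a * (s + π / 2) = a * (π / 2) + a * s by ring, cos_add]
    ring
  -- `sin² s = (1 - cos s)(1 + cos s)` and `K a (1 + cos s) ≤ 2 K a ≤ a² A`
  rw [hF, sin_sq, show 1 - cos s ^ 2 = (1 - cos s) * (1 + cos s) by ring]
  nlinarith [mul_nonneg hS (sub_nonneg.2 hchord), cos_le_one s,
    mul_nonneg (sub_nonneg.2 (cos_le_one s)) (sub_nonneg.2 hK2),
    mul_nonneg hK (sq_nonneg (1 - cos s))]

theorem F_nonneg_of_pi_le {a θ : ℝ} (ha0 : 0 ≤ a) (ha1 : a ≤ 1) (hθ : π ≤ θ)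
    (haθ : a * θ ≤ π) : 0 ≤ F a θ := by
  have hπ := pi_pos
  set A := cos (a * (π / 2))
  set S := sin (a * (π / 2))
  have hcos : cos (a * θ) ≤ 2 * A ^ 2 - 1 := by
    rw [← cos_two_mul, show 2 * (a * (π / 2)) = a * π by ring]
    exact cos_le_cos_of_nonneg_of_le_pi (by positivity) haθ (mul_le_mul_of_nonneg_left hθ ha0)
  have haS : a ≤ S := by
    simpa [show 2 / π * (a * (π / 2)) = a by field_simp] using
      mul_le_sin (x := a * (π / 2)) (by positivity) (by nlinarith)
  have hS : 0 ≤ S := by linarith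
  have hK := K_nonneg ha0 ha1
  have hK_eq : K a = A + a * S - 1 := rfl
  rw [F]
  nlinarith [mul_nonneg (mul_nonneg ha0 hS) (by linarith [neg_one_le_cos θ] : 0 ≤ 1 + cos θ),
    mul_nonneg hK (by nlinarith [cos_sq_le_one θ] : 0 ≤ 1 - cos θ ^ 2),
    mul_le_mul_of_nonneg_right haS hS, sin_sq_add_cos_sq (a * (π / 2))]

theorem F_nonneg {a θ : ℝ} (ha0 : 0 ≤ a) (ha1 : a ≤ 1) (hθ : 0 ≤ θ) (haθ : a * θ ≤ π) :
    0 ≤ F a θ := by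
  rcases le_total θ (π / 2) with hθ₁ | hθ₁
  · exact F_nonneg_of_le_pi_div_two ha0 ha1 ⟨hθ, hθ₁⟩
  rcases le_total θ π with hθ₂ | hθ₂
  · simpa using F_add_pi_div_two_nonneg ha0 ha1 (s := θ - π / 2) (by linarith) (by linarith)
  · exact F_nonneg_of_pi_le ha0 ha1 hθ₂ haθ

end KeyScalarInequality

/-- Lemma 3.1 of the paper: a key scalar inequality, with `q = π/p`. -/
theorem key_scalar_inequality (p : ℝ) (hp : 2 ≤ p)
    (q : ℝ) (hq : q = π / p)
    (x : ℝ) (hx : x ∈ Set.Icc (0 : ℝ) π) :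
    Real.cos q - Real.cos x + (2 / p) * Real.cos (p * x / 2) * Real.sin q -
      (Real.cos (p * x / 2)) ^ 2 * (Real.cos q + (2 / p) * Real.sin q - 1) ≥ 0 := by
  have hp0 : 0 < p := by linarith
  have hq' : 2 / p * (π / 2) = q := by rw [hq]; field_simp
  have hx' : 2 / p * (p * x / 2) = x := by field_simp
  have := KeyScalarInequality.F_nonneg (a := 2 / p) (θ := p * x / 2) (by positivity)
    ((div_le_one hp0).2 hp) (by have := hx.1; positivity) (hx'.symm ▸ hx.2)
  rwa [KeyScalarInequality.F, KeyScalarInequality.K, hq', hx'] at this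
end

section
/- Let p ≥ 2. Then for every s ∈ [0, π], 6p·cos(2s/p)·sin(2s) − 2·(p² − 4 + 2·(2 + p²)·(cos s)²)·sin(2s/p) ≤ 0. -/
/-!
Substituting `u = 2 s / p` and `cos (2 s) = 2 cos² s - 1`, the quantity becomes `-F(u)` where
`F(u) = (2p² + 4) cos (pu) sin u + (4p² - 4) sin u - 6p sin (pu) cos u`, and `s ∈ [0, π]` becomes
`(p/2) u ∈ [0, π]`. Since `F 0 = 0` it suffices that `F` is nondecreasing there, and
`F'(u) = 8 (p² - 1) sin (pu/2) (cos u sin (pu/2) - (p/2) cos (pu/2) sin u)`.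
With `q = p/2 ≥ 1`, `a = (q - 1) u`, `b = (q + 1) u`, the last factor times `2u` is
`b sin a - a sin b`, which is nonnegative because `sin x / x` decreases on `(0, π]` (concavity
of `sin`), and trivially so once `b > π ≥ a`.
-/

open Real Set

lemma mul_sin_le_mul_sin_of_le_pi {a b : ℝ} (ha : 0 ≤ a) (hab : a ≤ b) (hb : b ≤ π) :
    a * sin b ≤ b * sin a := by
  rcases ha.eq_or_lt with rfl | ha
  · simp
  have hb0 : 0 < b := ha.trans_le hab
  have h := strictConcaveOn_sin_Icc.concaveOn.slope_anti (x := 0) ⟨le_rfl, pi_pos.le⟩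
    ⟨⟨ha.le, hab.trans hb⟩, ha.ne'⟩ ⟨⟨hb0.le, hb⟩, hb0.ne'⟩ hab
  simp only [slope_def_field, sin_zero, sub_zero] at h
  rw [div_le_div_iff₀ hb0 ha] at h
  linarith

lemma mul_sin_le_mul_sin {a b : ℝ} (ha : 0 ≤ a) (hab : a ≤ b) (ha' : a ≤ π) (hb : b ≤ 2 * π) :
    a * sin b ≤ b * sin a := by
  rcases le_or_gt b π with hbπ | hπb
  · exact mul_sin_le_mul_sin_of_le_pi ha hab hbπ
  · have hsin_b : sin b ≤ 0 := by
      rw [← sin_sub_two_pi]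
      exact sin_nonpos_of_nonpos_of_neg_pi_le (by linarith) (by linarith)
    have hsin_a : 0 ≤ sin a := sin_nonneg_of_nonneg_of_le_pi ha ha'
    nlinarith

lemma mul_cos_mul_sin_le_cos_mul_sin_mul {q u : ℝ} (hq : 1 ≤ q) (hu : 0 ≤ u) (hqu : q * u ≤ π) :
    q * cos (q * u) * sin u ≤ cos u * sin (q * u) := by
  have key : 2 * u * (cos u * sin (q * u) - q * cos (q * u) * sin u) =
      (q * u + u) * sin (q * u - u) - (q * u - u) * sin (q * u + u) := by
    rw [sin_add, sin_sub]; ring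
  have := mul_sin_le_mul_sin (a := q * u - u) (b := q * u + u) (by nlinarith) (by linarith)
    (by linarith) (by nlinarith)
  rcases hu.eq_or_lt with rfl | hu
  · simp
  · nlinarith

/-- At `u = 2 s / p` this is `F u = -p³ (sin s)⁵ H'''(cos s)`. -/
noncomputable def negScaledThirdDeriv (p u : ℝ) : ℝ :=
  (2 * p ^ 2 + 4) * cos (p * u) * sin u + (4 * p ^ 2 - 4) * sin u - 6 * p * sin (p * u) * cos u

lemma hasDerivAt_negScaledThirdDeriv (p u : ℝ) :
    HasDerivAt (negScaledThirdDeriv p)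
      (8 * (p ^ 2 - 1) * sin (p / 2 * u) *
        (cos u * sin (p / 2 * u) - p / 2 * cos (p / 2 * u) * sin u)) u := by
  have hpu : HasDerivAt (p * ·) p u := by simpa using (hasDerivAt_id u).const_mul p
  have h := ((((hasDerivAt_cos (p * u)).comp u hpu).mul (hasDerivAt_sin u)).const_mul
      (2 * p ^ 2 + 4)).add ((hasDerivAt_sin u).const_mul (4 * p ^ 2 - 4)) |>.sub
      ((((hasDerivAt_sin (p * u)).comp u hpu).mul (hasDerivAt_cos u)).const_mul (6 * p))
  refine (h.congr_of_eventuallyEq (.of_forall fun v => ?_)).congr_deriv ?_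
  · simp only [negScaledThirdDeriv, Pi.add_apply, Pi.sub_apply, Pi.mul_apply, Function.comp_apply]
    ring
  simp only [Function.comp_apply]
  rw [show p * u = 2 * (p / 2 * u) by ring, cos_two_mul, sin_two_mul]
  linear_combination -8 * (p ^ 2 - 1) * cos u * sin_sq_add_cos_sq (p / 2 * u)

lemma negScaledThirdDeriv_nonneg {p u : ℝ} (hp : 2 ≤ p) (hu : 0 ≤ u) (hpu : p / 2 * u ≤ π) :
    0 ≤ negScaledThirdDeriv p u := by
  have hmono : MonotoneOn (negScaledThirdDeriv p) (Icc 0 u) := by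
    refine monotoneOn_of_hasDerivWithinAt_nonneg (convex_Icc 0 u)
      (fun x _ => (hasDerivAt_negScaledThirdDeriv p x).continuousAt.continuousWithinAt)
      (fun x _ => (hasDerivAt_negScaledThirdDeriv p x).hasDerivWithinAt) fun x hx => ?_
    rw [interior_Icc] at hx
    have hpx : p / 2 * x ≤ π := (mul_le_mul_of_nonneg_left hx.2.le (by linarith)).trans hpu
    have hsin : 0 ≤ sin (p / 2 * x) :=
      sin_nonneg_of_nonneg_of_le_pi (by nlinarith [hx.1]) hpx
    have hbracket := mul_cos_mul_sin_le_cos_mul_sin_mul (by linarith) hx.1.le hpx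
    have hp2 : 0 ≤ p ^ 2 - 1 := by nlinarith
    have := mul_nonneg (mul_nonneg hp2 hsin) (sub_nonneg.2 hbracket)
    nlinarith
  simpa [negScaledThirdDeriv] using hmono ⟨le_rfl, hu⟩ ⟨hu, le_rfl⟩ hu

/-- Lemma 3.2 of the paper: nonpositivity of `p³ (sin s)⁵ H'''(cos s)`. -/
theorem third_derivative_nonpos (p : ℝ) (hp : 2 ≤ p)
    (s : ℝ) (hs : s ∈ Set.Icc (0 : ℝ) π) :
    6 * p * Real.cos (2 * s / p) * Real.sin (2 * s) -
      2 * (p ^ 2 - 4 + 2 * (2 + p ^ 2) * (Real.cos s) ^ 2) * Real.sin (2 * s / p)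
      ≤ 0 := by
  have hp0 : 0 < p := by linarith
  have hpu : p * (2 * s / p) = 2 * s := by field_simp
  have hqu : p / 2 * (2 * s / p) = s := by field_simp
  have hsubst : 6 * p * cos (2 * s / p) * sin (2 * s) -
      2 * (p ^ 2 - 4 + 2 * (2 + p ^ 2) * cos s ^ 2) * sin (2 * s / p) =
      -negScaledThirdDeriv p (2 * s / p) := by
    rw [negScaledThirdDeriv, hpu, cos_two_mul]
    ring
  rw [hsubst, neg_nonpos]
  exact negScaledThirdDeriv_nonneg hp (div_nonneg (by linarith [hs.1]) hp0.le)
    (by rw [hqu]; exact hs.2)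
end

section
/- Let p ≥ 2. Then for every s ∈ (0, π), cos(s)/sin(s) ≤ (2/p)·cos(2s/p)/sin(2s/p), i.e. cot s − (2/p)·cot(2s/p) ≤ 0. -/
/-!
The function `x ↦ x · cot x` is decreasing on `(0, π)`: its derivative is
`(sin x cos x − x) / sin² x`, and `sin x cos x = sin (2x) / 2 < x`. Since `t := 2s/p ≤ s`,
this gives `s · cot s ≤ t · cot t = s · (2/p) · cot t`; divide by `s > 0`.
-/

open Real

lemma sin_mul_cos_lt_self {x : ℝ} (hx : 0 < x) : sin x * cos x < x := by
  have h : sin (2 * x) < 2 * x := sin_lt (by positivity)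
  rw [sin_two_mul] at h
  linarith

lemma hasDerivAt_mul_cos_div_sin {x : ℝ} (hx : sin x ≠ 0) :
    HasDerivAt (fun y ↦ y * (cos y / sin y)) ((sin x * cos x - x) / sin x ^ 2) x := by
  have h : HasDerivAt (fun y ↦ y * (cos y / sin y))
      (1 * (cos x / sin x) + x * ((-sin x * sin x - cos x * cos x) / sin x ^ 2)) x :=
    (hasDerivAt_id' x).mul ((hasDerivAt_cos x).div (hasDerivAt_sin x) hx)
  convert h using 1
  field_simp
  linear_combination x * sin_sq_add_cos_sq x

lemma strictAntiOn_mul_cos_div_sin :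
    StrictAntiOn (fun x ↦ x * (cos x / sin x)) (Set.Ioo 0 π) := by
  have hsin : ∀ x ∈ Set.Ioo 0 π, sin x ≠ 0 := fun x hx ↦ (sin_pos_of_pos_of_lt_pi hx.1 hx.2).ne'
  refine strictAntiOn_of_deriv_neg (convex_Ioo 0 π)
    (continuousOn_id.mul (continuousOn_cos.div continuousOn_sin hsin)) fun x hx ↦ ?_
  rw [interior_Ioo] at hx
  rw [(hasDerivAt_mul_cos_div_sin (hsin x hx)).deriv]
  exact div_neg_of_neg_of_pos (sub_neg.2 (sin_mul_cos_lt_self hx.1))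
    (pow_pos (sin_pos_of_pos_of_lt_pi hx.1 hx.2) 2)

/-- The auxiliary inequality `cot s − (2/p)·cot(2s/p) ≤ 0` from the proof of
Lemma 3.2 of the paper. -/
theorem cot_inequality (p : ℝ) (hp : 2 ≤ p)
    (s : ℝ) (hs : s ∈ Set.Ioo (0 : ℝ) π) :
    Real.cos s / Real.sin s ≤
      (2 / p) * (Real.cos (2 * s / p) / Real.sin (2 * s / p)) := by
  obtain ⟨hs0, hsπ⟩ := hs
  have hp0 : 0 < p := by linarith
  have hts : 2 * s / p ≤ s := by
    rw [div_le_iff₀ hp0]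
    nlinarith
  refine le_of_mul_le_mul_left ?_ hs0
  calc s * (cos s / sin s) ≤ 2 * s / p * (cos (2 * s / p) / sin (2 * s / p)) :=
        strictAntiOn_mul_cos_div_sin.antitoneOn ⟨by positivity, hts.trans_lt hsπ⟩ ⟨hs0, hsπ⟩ hts
    _ = s * (2 / p * (cos (2 * s / p) / sin (2 * s / p))) := by ring
end

section
/- Let p ≥ 2. Then for every t ∈ [0, 1], (1 − t)^{2/p} ≤ 1 − 2t/p − (p − 2)·t²/p². -/
/-!
With `s = 2 / p ∈ (0, 1]` the right-hand side is the second-order Taylor polynomial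
`1 - s t - s (1 - s) t² / 2` of `(1 - t) ^ s` at `0`. The gap between the two sides vanishes at
`t = 0` and has derivative `s ((1 - t) ^ (s - 1) - (1 + (1 - s) t))`, which is nonnegative by
Bernoulli's inequality for the exponent `s - 1 ∈ [-1, 0]`; hence the gap is nonnegative on `[0, 1]`.
-/

open Real Set

theorem one_add_mul_self_le_rpow_one_add_of_nonpos {s : ℝ} (hs : -1 < s) {p : ℝ}
    (hp1 : -1 ≤ p) (hp2 : p ≤ 0) : 1 + p * s ≤ (1 + s) ^ p := by
  have hbase : 0 < 1 + s := by linarith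
  have hbern : (1 + s) ^ (-p) ≤ 1 + -p * s :=
    rpow_one_add_le_one_add_mul_self hs.le (by linarith) (by linarith)
  have hpos : 0 < (1 + s) ^ (-p) := rpow_pos_of_pos hbase _
  -- Invert the concave Bernoulli bound, using `(1 + p s)(1 - p s) ≤ 1`.
  calc 1 + p * s ≤ (1 + -p * s)⁻¹ := by
        rw [← one_div, le_div_iff₀ (hpos.trans_le hbern)]
        nlinarith [sq_nonneg (p * s)]
    _ ≤ ((1 + s) ^ (-p))⁻¹ := inv_anti₀ hpos hbern
    _ = (1 + s) ^ p := by rw [rpow_neg hbase.le, inv_inv]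

theorem rpow_one_sub_le_quadratic {s : ℝ} (hs0 : 0 < s) (hs1 : s ≤ 1) {t : ℝ}
    (ht : t ∈ Icc (0 : ℝ) 1) : (1 - t) ^ s ≤ 1 - s * t - s * (1 - s) * t ^ 2 / 2 := by
  let g : ℝ → ℝ := fun x => 1 - s * x - s * (1 - s) * x ^ 2 / 2 - (1 - x) ^ s
  have hg_cont : ContinuousOn g (Icc 0 1) := by
    exact ContinuousOn.sub (by fun_prop) ((continuousOn_const.sub continuousOn_id).rpow_const
      fun _ _ => Or.inr hs0.le)
  have hg_deriv : ∀ x ∈ Ioo (0 : ℝ) 1,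
      HasDerivAt g (s * ((1 - x) ^ (s - 1) - (1 + (1 - s) * x))) x := by
    intro x hx
    have hbase : 1 - x ≠ 0 := by linarith [hx.2]
    refine (((((hasDerivAt_id x).const_mul s).const_sub 1).sub
      (((hasDerivAt_pow 2 x).const_mul (s * (1 - s))).div_const 2)).sub
      (((hasDerivAt_id x).const_sub 1).rpow_const (p := s) (Or.inl hbase))).congr_deriv ?_
    simp only [id, Nat.cast_ofNat]
    ring
  have hg_mono : MonotoneOn g (Icc 0 1) := by
    refine monotoneOn_of_hasDerivWithinAt_nonneg (convex_Icc 0 1) hg_cont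
      (f' := fun x => s * ((1 - x) ^ (s - 1) - (1 + (1 - s) * x)))
      (fun x hx => ?_) (fun x hx => ?_)
    · rw [interior_Icc] at hx
      exact (hg_deriv x hx).hasDerivWithinAt
    · rw [interior_Icc] at hx
      have hbern := one_add_mul_self_le_rpow_one_add_of_nonpos (s := -x) (p := s - 1)
        (by linarith [hx.2]) (by linarith) (by linarith)
      rw [← sub_eq_add_neg] at hbern
      exact mul_nonneg hs0.le (by linarith)
  simpa [g] using hg_mono ⟨le_rfl, zero_le_one⟩ ht ht.1

/-- Inequality (3.10) of the paper: a quadratic upper bound for `(1 − t)^{2/p}`. -/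
theorem rpow_quadratic_bound (p : ℝ) (hp : 2 ≤ p)
    (t : ℝ) (ht : t ∈ Set.Icc (0 : ℝ) 1) :
    (1 - t) ^ ((2 : ℝ) / p) ≤ 1 - 2 * t / p - (p - 2) * t ^ 2 / p ^ 2 := by
  have hp0 : 0 < p := by linarith
  calc (1 - t) ^ ((2 : ℝ) / p)
      ≤ 1 - 2 / p * t - 2 / p * (1 - 2 / p) * t ^ 2 / 2 :=
        rpow_one_sub_le_quadratic (by positivity) ((div_le_one hp0).2 hp) ht
    _ = 1 - 2 * t / p - (p - 2) * t ^ 2 / p ^ 2 := by field_simp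
end

section
/- Let p ≥ 2 and 0 < b < 1. Then 4·(b − b^{p/2})² ≤ (p − 2)²·b·(1 − b)². -/
/-!
Write `b ^ (p / 2) = b · b ^ t` with `t = p / 2 - 1 ≥ 0`; the claim becomes
`√b (1 - b ^ t) ≤ t (1 - b)`. The tangent line of `exp` at `0` gives `1 - b ^ t ≤ t (-log b)`,
and `sinh x ≤ x` for `x = log √b ≤ 0` gives `√b (-log b) ≤ 1 - b`.
-/

open Real

namespace Real

lemma mul_log_add_one_le_rpow {b : ℝ} (hb : 0 < b) (t : ℝ) : t * log b + 1 ≤ b ^ t := by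
  rw [rpow_def_of_pos hb, mul_comm]
  exact add_one_le_exp _

lemma sub_one_le_sqrt_mul_log {b : ℝ} (hb0 : 0 < b) (hb1 : b ≤ 1) : b - 1 ≤ √b * log b := by
  have hs : 0 < √b := sqrt_pos.mpr hb0
  have hsinh : sinh (log √b) ≤ log √b :=
    sinh_le_self_iff.mpr (log_nonpos hs.le (sqrt_le_one.mpr hb1))
  rw [sinh_log hs] at hsinh
  have key := mul_le_mul_of_nonneg_left hsinh (by positivity : 0 ≤ 2 * √b)
  rw [log_sqrt hb0.le] at key
  field_simp at key
  rw [sq_sqrt hb0.le] at key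
  linarith

lemma sqrt_mul_one_sub_rpow_le {b t : ℝ} (hb0 : 0 < b) (hb1 : b ≤ 1) (ht : 0 ≤ t) :
    √b * (1 - b ^ t) ≤ t * (1 - b) := by
  have h_exp := mul_log_add_one_le_rpow hb0 t
  have h_sinh := sub_one_le_sqrt_mul_log hb0 hb1
  calc √b * (1 - b ^ t) ≤ √b * (t * -log b) := by gcongr; linarith
    _ = t * -(√b * log b) := by ring
    _ ≤ t * (1 - b) := by gcongr; linarith

end Real

/-- Lemma 3.4 of the paper: `4(b − b^{p/2})² ≤ (p − 2)²·b·(1 − b)²`. -/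
theorem lemma_b_power (p b : ℝ) (hp : 2 ≤ p) (hb0 : 0 < b) (hb1 : b < 1) :
    4 * (b - b ^ (p / 2)) ^ 2 ≤ (p - 2) ^ 2 * b * (1 - b) ^ 2 := by
  have ht : 0 ≤ p / 2 - 1 := by linarith
  set t := p / 2 - 1
  have hsplit : b - b ^ (p / 2) = √b * (√b * (1 - b ^ t)) := by
    rw [show p / 2 = 1 + t by ring, rpow_add hb0, rpow_one, ← mul_assoc, mul_self_sqrt hb0.le]
    ring
  have hnonneg : 0 ≤ √b * (1 - b ^ t) :=
    mul_nonneg (sqrt_nonneg b) (sub_nonneg.mpr (rpow_le_one hb0.le hb1.le ht))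
  have hbound := sqrt_mul_one_sub_rpow_le hb0 hb1.le ht
  calc 4 * (b - b ^ (p / 2)) ^ 2 = 4 * b * (√b * (1 - b ^ t)) ^ 2 := by
        rw [hsplit, mul_pow, sq_sqrt hb0.le]; ring
    _ ≤ 4 * b * (t * (1 - b)) ^ 2 := by gcongr
    _ = (p - 2) ^ 2 * b * (1 - b) ^ 2 := by ring
end

section
/- Let p ≥ 2 and set q = π/p. Then for all s ∈ [0, 1] and t ∈ [0, 1], −6t + (−4 − 4s·(t − 1) + 6t)·cos q + √2·√((1 + s²·(t − 1))·t·(4·(2 − t)·cos q + t·(3 + cos(2q)))) ≤ 4t·(cos q − 1). -/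
/-!
Write `c = cos q`, so `cos 2q = 2c² − 1`. After moving the linear terms to the right, the claim
says that `√2 · √X`, with `X` the radicand, is at most `R = 2t(1 − c) + 4c(1 + s(t − 1))`, which is nonnegative because
`0 ≤ c ≤ 1`. Squaring, this follows from the identity
`R² − 2X = 4(1 − t)(2c(1 − s) − st(1 − c))²`, whose right side is nonnegative for `t ≤ 1`.
-/

open Real

lemma cos_pi_div_nonneg {p : ℝ} (hp : 2 ≤ p) : 0 ≤ cos (π / p) := by
  have hp0 : 0 < p := by linarith
  apply cos_nonneg_of_mem_Icc
  constructor
  · linarith [div_pos pi_pos hp0, pi_pos]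
  · rw [div_le_div_iff₀ hp0 two_pos]
    nlinarith [pi_pos]

lemma sq_sub_two_mul_radicand (c s t : ℝ) :
    (2 * t * (1 - c) + 4 * c * (1 + s * (t - 1))) ^ 2
        - 2 * ((1 + s ^ 2 * (t - 1)) * t * (4 * (2 - t) * c + t * (3 + (2 * c ^ 2 - 1)))) =
      4 * (1 - t) * (2 * c * (1 - s) - s * t * (1 - c)) ^ 2 := by
  ring

lemma sqrt_two_mul_sqrt_radicand_le {c s t : ℝ} (hc : c ∈ Set.Icc (0 : ℝ) 1)
    (hs : s ∈ Set.Icc (0 : ℝ) 1) (ht : t ∈ Set.Icc (0 : ℝ) 1) :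
    √2 * √((1 + s ^ 2 * (t - 1)) * t * (4 * (2 - t) * c + t * (3 + (2 * c ^ 2 - 1)))) ≤
      2 * t * (1 - c) + 4 * c * (1 + s * (t - 1)) := by
  obtain ⟨hc0, hc1⟩ := hc
  obtain ⟨hs0, hs1⟩ := hs
  obtain ⟨ht0, ht1⟩ := ht
  have hR : 0 ≤ 2 * t * (1 - c) + 4 * c * (1 + s * (t - 1)) := by
    have : 0 ≤ 1 + s * (t - 1) := by nlinarith
    positivity
  rw [← sqrt_mul zero_le_two, sqrt_le_left hR]
  nlinarith [sq_sub_two_mul_radicand c s t,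
    mul_nonneg (sub_nonneg.2 ht1) (sq_nonneg (2 * c * (1 - s) - s * t * (1 - c)))]

/-- The maximum-value claim for the function `g(s,t)` in case (ii) of the proof
of Theorem 1.3: `g(s,t) ≤ g(s₀,t) = 4t(cos q − 1)`, where `q = π/p`. -/
theorem g_st_max (p : ℝ) (hp : 2 ≤ p)
    (q : ℝ) (hq : q = π / p)
    (s t : ℝ) (hs : s ∈ Set.Icc (0 : ℝ) 1) (ht : t ∈ Set.Icc (0 : ℝ) 1) :
    -6 * t + (-4 - 4 * s * (t - 1) + 6 * t) * Real.cos q +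
      Real.sqrt 2 * Real.sqrt ((1 + s ^ 2 * (t - 1)) * t *
        (4 * (2 - t) * Real.cos q + t * (3 + Real.cos (2 * q))))
      ≤ 4 * t * (Real.cos q - 1) := by
  have hc : cos q ∈ Set.Icc (0 : ℝ) 1 := ⟨hq ▸ cos_pi_div_nonneg hp, cos_le_one q⟩
  rw [cos_two_mul]
  linarith [sqrt_two_mul_sqrt_radicand_le hc hs ht]
end

section
/- Let p ≥ 2. Then 2 − 4/p² − 2·cos(π/p) − (2/p)·sin(π/p) ≤ 0, with equality if and only if p = 2. -/
/-!
Put `x = π / p ∈ (0, π / 2]`. Then `H'(1) = x² (trigRatio x - trigRatio (π / 2))`, so it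
suffices that `trigRatio` is strictly increasing on `(0, π / 2]`. The numerator of its
derivative is `(2 / π) ((π + 1) x sin x - x² cos x - 2π (1 - cos x))`; since `2π - x² > 0`, the
Taylor bounds `sin x ≥ x - x³/6 + x⁵/120 - x⁷/5040` and `cos x ≥ 1 - x²/2 + x⁴/24 - x⁶/720`
bound it below by `x⁴ ((4 - π)/12 + (π - 6) x²/180 + (6 - π) x⁴/5040) > 0`.
-/

open Real Set

theorem nonneg_of_deriv_nonneg {f : ℝ → ℝ} (hf : Differentiable ℝ f) (h₀ : f 0 = 0)
    (hf' : ∀ t, 0 < t → 0 ≤ deriv f t) {x : ℝ} (hx : 0 ≤ x) : 0 ≤ f x :=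
  h₀ ▸ monotoneOn_of_deriv_nonneg (convex_Ici 0) hf.continuous.continuousOn
    hf.differentiableOn (by simpa using hf') self_mem_Ici hx hx

namespace Real

theorem cos_le_taylor_four {x : ℝ} (hx : 0 ≤ x) : cos x ≤ 1 - x ^ 2 / 2 + x ^ 4 / 24 := by
  have := nonneg_of_deriv_nonneg (f := fun t ↦ 1 - t ^ 2 / 2 + t ^ 4 / 24 - cos t) (by fun_prop)
    (by simp) (fun t ht ↦ by
      simp (disch := fun_prop)
      linarith [sin_ge_sub_cube ht.le]) hx
  linarith

theorem sin_le_taylor_five {x : ℝ} (hx : 0 ≤ x) :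
    sin x ≤ x - x ^ 3 / 6 + x ^ 5 / 120 := by
  have := nonneg_of_deriv_nonneg (f := fun t ↦ t - t ^ 3 / 6 + t ^ 5 / 120 - sin t) (by fun_prop)
    (by simp) (fun t ht ↦ by
      simp (disch := fun_prop)
      linarith [cos_le_taylor_four ht.le]) hx
  linarith

theorem taylor_six_le_cos {x : ℝ} (hx : 0 ≤ x) :
    1 - x ^ 2 / 2 + x ^ 4 / 24 - x ^ 6 / 720 ≤ cos x := by
  have := nonneg_of_deriv_nonneg
    (f := fun t ↦ cos t - (1 - t ^ 2 / 2 + t ^ 4 / 24 - t ^ 6 / 720)) (by fun_prop)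
    (by simp) (fun t ht ↦ by
      simp (disch := fun_prop)
      linarith [sin_le_taylor_five ht.le]) hx
  linarith

theorem taylor_seven_le_sin {x : ℝ} (hx : 0 ≤ x) :
    x - x ^ 3 / 6 + x ^ 5 / 120 - x ^ 7 / 5040 ≤ sin x := by
  have := nonneg_of_deriv_nonneg
    (f := fun t ↦ sin t - (t - t ^ 3 / 6 + t ^ 5 / 120 - t ^ 7 / 5040)) (by fun_prop)
    (by simp) (fun t ht ↦ by
      simp (disch := fun_prop)
      linarith [taylor_six_le_cos ht.le]) hx
  linarith

end Real

noncomputable def trigRatio (x : ℝ) : ℝ := (2 - 2 * cos x - 2 / π * x * sin x) / x ^ 2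

theorem trigRatio_deriv_numerator_pos {x : ℝ} (h₀ : 0 < x) (h₁ : x ≤ π / 2) :
    0 < (π + 1) * x * sin x - x ^ 2 * cos x - 2 * π * (1 - cos x) := by
  have hπ₃ := pi_gt_three
  have hπ := pi_lt_d2
  have hx2 : x ^ 2 ≤ π ^ 2 / 4 := by nlinarith
  have hsin := mul_le_mul_of_nonneg_left (taylor_seven_le_sin h₀.le)
    (by positivity : 0 ≤ (π + 1) * x)
  have hcos := mul_le_mul_of_nonneg_left (taylor_six_le_cos h₀.le)
    (by nlinarith : 0 ≤ 2 * π - x ^ 2)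
  have hquad : 0 < (4 - π) / 12 + (π - 6) / 180 * x ^ 2 := by nlinarith
  have hquart : 0 ≤ (6 - π) / 5040 * x ^ 4 := mul_nonneg (by linarith) (by positivity)
  calc 0 < x ^ 4 * ((4 - π) / 12 + (π - 6) / 180 * x ^ 2 + (6 - π) / 5040 * x ^ 4) := by
        positivity
    _ = (π + 1) * x * (x - x ^ 3 / 6 + x ^ 5 / 120 - x ^ 7 / 5040)
          + (2 * π - x ^ 2) * (1 - x ^ 2 / 2 + x ^ 4 / 24 - x ^ 6 / 720) - 2 * π := by ring
    _ ≤ _ := by linarith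

theorem hasDerivAt_trigRatio {x : ℝ} (hx : x ≠ 0) :
    HasDerivAt trigRatio
      (2 / π * ((π + 1) * x * sin x - x ^ 2 * cos x - 2 * π * (1 - cos x)) / x ^ 3) x := by
  have hnum : HasDerivAt (fun t ↦ 2 - 2 * cos t - 2 / π * t * sin t)
      (2 * sin x - 2 / π * (sin x + x * cos x)) x :=
    (((hasDerivAt_const x 2).fun_sub ((hasDerivAt_cos x).const_mul 2)).fun_sub
      (((hasDerivAt_id' x).const_mul (2 / π)).fun_mul (hasDerivAt_sin x))).congr_deriv
      (by ring)
  refine (hnum.div (hasDerivAt_pow 2 x) (pow_ne_zero 2 hx)).congr_deriv ?_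
  field_simp
  ring

theorem trigRatio_strictMonoOn : StrictMonoOn trigRatio (Ioc 0 (π / 2)) := by
  refine strictMonoOn_of_deriv_pos (convex_Ioc 0 (π / 2)) ?_ fun x hx ↦ ?_
  · exact fun x hx ↦ (hasDerivAt_trigRatio hx.1.ne').continuousAt.continuousWithinAt
  rw [interior_Ioc] at hx
  rw [(hasDerivAt_trigRatio hx.1.ne').deriv]
  exact div_pos (mul_pos (by positivity) (trigRatio_deriv_numerator_pos hx.1 hx.2.le))
    (pow_pos hx.1 3)

theorem trigRatio_pi_div_two : trigRatio (π / 2) = 4 / π ^ 2 := by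
  simp only [trigRatio, cos_pi_div_two, sin_pi_div_two]
  field_simp
  ring

/-- The evaluation `H'(1) = 2 − 4/p² − 2 cos(π/p) − (2/p) sin(π/p) ≤ 0`
used in the proof of Lemma 3.1, with equality exactly at `p = 2`. -/
theorem H_prime_one_nonpos (p : ℝ) (hp : 2 ≤ p) :
    2 - 4 / p ^ 2 - 2 * Real.cos (π / p) - (2 / p) * Real.sin (π / p) ≤ 0 ∧
    (2 - 4 / p ^ 2 - 2 * Real.cos (π / p) - (2 / p) * Real.sin (π / p) = 0 ↔
      p = 2) := by
  have hp₀ : 0 < p := by linarith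
  have hx : π / p ∈ Ioc 0 (π / 2) :=
    ⟨by positivity, div_le_div_of_nonneg_left pi_pos.le two_pos hp⟩
  have hπ₂ : π / 2 ∈ Ioc 0 (π / 2) := ⟨by positivity, le_rfl⟩
  have hH : 2 - 4 / p ^ 2 - 2 * cos (π / p) - (2 / p) * sin (π / p)
      = (π / p) ^ 2 * (trigRatio (π / p) - trigRatio (π / 2)) := by
    rw [trigRatio_pi_div_two, trigRatio]
    field_simp
    ring
  have hpos : 0 < (π / p) ^ 2 := by positivity
  have hle : trigRatio (π / p) ≤ trigRatio (π / 2) :=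
    trigRatio_strictMonoOn.monotoneOn hx hπ₂ hx.2
  have heq : trigRatio (π / p) = trigRatio (π / 2) ↔ p = 2 := by
    rw [trigRatio_strictMonoOn.injOn.eq_iff hx hπ₂, div_eq_div_iff hp₀.ne' two_ne_zero,
      mul_right_inj' pi_ne_zero, eq_comm]
  rw [hH, mul_eq_zero, sub_eq_zero, or_iff_right hpos.ne', heq]
  exact ⟨mul_nonpos_of_nonneg_of_nonpos hpos.le (sub_nonpos.2 hle), Iff.rfl⟩
end

section
/- Let p ≥ 2. Then π/(2p) ≤ tan(π/(2p)) ≤ (4 − π)/p² + π/(2p). -/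
/-!
The lower bound is `x ≤ tan x`. For the upper bound, `(tan x - x) / x²` is increasing on
`(0, π/2)` and equals `4(4 - π)/π²` at `x = π/4`, so at `x = π/(2p) ≤ π/4` we get
`tan x - x ≤ 4(4 - π)/π² · x² = (4 - π)/p²`. The derivative of `(tan x - x) / x²` has the sign
of `x tan² x - 2(tan x - x)`, which vanishes at `0` and has derivative
`tan x · (2x(1 + tan² x) - tan x) ≥ 0`, because `sin x cos x ≤ x`.
-/

open Real Set

lemma monotoneOn_of_hasDerivAt_nonneg {D : Set ℝ} (hD : Convex ℝ D) {f f' : ℝ → ℝ}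
    (hf : ∀ x ∈ D, HasDerivAt f (f' x) x) (hf' : ∀ x ∈ interior D, 0 ≤ f' x) :
    MonotoneOn f D :=
  monotoneOn_of_hasDerivWithinAt_nonneg hD
    (fun x hx ↦ (hf x hx).continuousAt.continuousWithinAt)
    (fun x hx ↦ (hf x (interior_subset hx)).hasDerivWithinAt) hf'

namespace Real

lemma hasDerivAt_tan_eq_one_add_tan_sq {x : ℝ} (hx : cos x ≠ 0) :
    HasDerivAt tan (1 + tan x ^ 2) x :=
  (hasDerivAt_tan hx).congr_deriv <| by rw [one_div, ← inv_one_add_tan_sq hx, inv_inv]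

lemma tan_le_mul_one_add_tan_sq {x : ℝ} (hx₀ : 0 ≤ x) (hx : x < π / 2) :
    tan x ≤ x * (1 + tan x ^ 2) := by
  have hcos : 0 < cos x := cos_pos_of_mem_Ioo ⟨by linarith [pi_pos], hx⟩
  have hsin_mul_cos : sin x * cos x ≤ x := by
    nlinarith [sin_le hx₀, cos_le_one x, sin_nonneg_of_nonneg_of_le_pi hx₀ (by linarith)]
  rw [← inv_inv (1 + tan x ^ 2), inv_one_add_tan_sq hcos.ne', tan_eq_sin_div_cos,
    ← div_eq_mul_inv, div_le_div_iff₀ hcos (by positivity)]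
  nlinarith [mul_le_mul_of_nonneg_right hsin_mul_cos hcos.le]

lemma two_mul_tan_sub_self_le {x : ℝ} (hx₀ : 0 ≤ x) (hx : x < π / 2) :
    2 * (tan x - x) ≤ x * tan x ^ 2 := by
  have hderiv : ∀ y ∈ Ico 0 (π / 2), HasDerivAt (fun y ↦ y * tan y ^ 2 - 2 * (tan y - y))
      (tan y * (2 * y * (1 + tan y ^ 2) - tan y)) y := by
    intro y hy
    have htan := hasDerivAt_tan_eq_one_add_tan_sq
      (cos_pos_of_mem_Ioo ⟨by linarith [pi_pos, hy.1], hy.2⟩).ne'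
    refine (((hasDerivAt_id' y).fun_mul (htan.fun_pow 2)).fun_sub
      ((htan.fun_sub (hasDerivAt_id' y)).const_mul 2)).congr_deriv ?_
    norm_num
    ring
  have hmono := monotoneOn_of_hasDerivAt_nonneg (convex_Ico _ _) hderiv fun y hy ↦ by
    rw [interior_Ico] at hy
    have htan₀ : 0 ≤ tan y := tan_nonneg_of_nonneg_of_le_pi_div_two hy.1.le hy.2.le
    nlinarith [tan_le_mul_one_add_tan_sq hy.1.le hy.2]
  have := hmono ⟨le_rfl, by positivity⟩ ⟨hx₀, hx⟩ hx₀
  simp only [tan_zero] at this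
  linarith

lemma monotoneOn_tan_sub_self_div_sq :
    MonotoneOn (fun x ↦ (tan x - x) / x ^ 2) (Ioo 0 (π / 2)) := by
  have hderiv : ∀ x ∈ Ioo 0 (π / 2), HasDerivAt (fun x ↦ (tan x - x) / x ^ 2)
      (x * (x * tan x ^ 2 - 2 * (tan x - x)) / (x ^ 2) ^ 2) x := by
    intro x hx
    have htan := hasDerivAt_tan_eq_one_add_tan_sq
      (cos_pos_of_mem_Ioo ⟨by linarith [pi_pos, hx.1], hx.2⟩).ne'
    refine ((htan.fun_sub (hasDerivAt_id' x)).fun_div ((hasDerivAt_id' x).fun_pow 2)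
      (pow_ne_zero 2 hx.1.ne')).congr_deriv ?_
    norm_num
    ring
  refine monotoneOn_of_hasDerivAt_nonneg (convex_Ioo _ _) hderiv fun x hx ↦ ?_
  rw [interior_Ioo] at hx
  exact div_nonneg (mul_nonneg hx.1.le (sub_nonneg.2 (two_mul_tan_sub_self_le hx.1.le hx.2)))
    (by positivity)

lemma tan_le_self_add_mul_sq {x y : ℝ} (hx₀ : 0 < x) (hxy : x ≤ y) (hy : y < π / 2) :
    tan x ≤ x + (tan y - y) / y ^ 2 * x ^ 2 := by
  have h := monotoneOn_tan_sub_self_div_sq ⟨hx₀, hxy.trans_lt hy⟩ ⟨hx₀.trans_le hxy, hy⟩ hxy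
  rw [div_le_iff₀ (by positivity)] at h
  linarith

end Real

/-- The double inequality `π/(2p) ≤ tan(π/(2p)) ≤ (4 − π)/p² + π/(2p)` used in
the final part of the proof of Theorem 1.3. -/
theorem tan_double_bound (p : ℝ) (hp : 2 ≤ p) :
    π / (2 * p) ≤ Real.tan (π / (2 * p)) ∧
    Real.tan (π / (2 * p)) ≤ (4 - π) / p ^ 2 + π / (2 * p) := by
  have hx₀ : 0 < π / (2 * p) := by positivity
  have hx : π / (2 * p) ≤ π / 4 := by gcongr; linarith
  refine ⟨le_tan hx₀.le (by linarith [pi_pos]), ?_⟩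
  have h := tan_le_self_add_mul_sq hx₀ hx (by linarith [pi_pos])
  have hcoeff : (tan (π / 4) - π / 4) / (π / 4) ^ 2 * (π / (2 * p)) ^ 2 = (4 - π) / p ^ 2 := by
    rw [tan_pi_div_four]
    field_simp
    ring
  linarith
end

section
/- Let p > 2 and c > 0. Set q = π/p, S = √(1 + c² + 2c·cos(2q)), and R = 2c·cos(q)/(c − 1 + S). Then c − 1 + S > 0, cos q < R < 1/cos q, and c·(R − cos q) = R·(1 − R·cos q) (equivalently, c = R·(1 − R·cos q)/(R − cos q)). -/
open Real Set

/-!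
With `a = cos q ∈ (0, 1)` the radicand is `(c - 1)² + 4ca²`, and `R` is the positive root
`(S - (c - 1)) / (2a)` of `aR² + (c - 1)R - ca`, i.e. of `c (R - a) = R (1 - Ra)`, written with a
rationalised denominator. The bounds `a < R < 1/a` become `c - 1 + 2a² < S < c + 1`, which
compare squares: `S² - (c - 1 + 2a²)² = 4a²(1 - a²)` and `(c + 1)² - S² = 4c(1 - a²)`.
-/

lemma one_add_sq_add_two_mul_mul_cos_two_mul (c q : ℝ) :
    1 + c ^ 2 + 2 * c * cos (2 * q) = (c - 1) ^ 2 + 4 * c * cos q ^ 2 := by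
  rw [cos_two_mul]; ring

lemma cos_pi_div_mem_Ioo {p : ℝ} (hp : 2 < p) : cos (π / p) ∈ Ioo 0 1 := by
  have hpos : 0 < π / p := div_pos pi_pos (by linarith)
  have hlt : π / p < π / 2 := div_lt_div_of_pos_left pi_pos two_pos hp
  refine ⟨cos_pos_of_mem_Ioo ⟨by linarith, hlt⟩, ?_⟩
  calc cos (π / p) < cos 0 := cos_lt_cos_of_nonneg_of_le_pi le_rfl (by linarith) hpos
    _ = 1 := cos_zero

section

variable {a c : ℝ}

lemma one_sub_lt_sqrt (ha : a ≠ 0) (hc : 0 < c) : 1 - c < √((c - 1) ^ 2 + 4 * c * a ^ 2) :=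
  lt_sqrt_of_sq_lt (by nlinarith [mul_pos hc (sq_pos_of_ne_zero ha)])

lemma sub_one_add_two_mul_sq_lt_sqrt (ha : a ≠ 0) (ha1 : a ^ 2 < 1) :
    c - 1 + 2 * a ^ 2 < √((c - 1) ^ 2 + 4 * c * a ^ 2) :=
  lt_sqrt_of_sq_lt (by nlinarith [sq_pos_of_ne_zero ha])

lemma sqrt_lt_add_one (hc : 0 < c) (ha1 : a ^ 2 < 1) :
    √((c - 1) ^ 2 + 4 * c * a ^ 2) < c + 1 :=
  (sqrt_lt' (by linarith)).mpr (by nlinarith)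

lemma two_mul_mul_div_eq_sub_div (ha : a ≠ 0) (hc : 0 < c) :
    2 * c * a / (c - 1 + √((c - 1) ^ 2 + 4 * c * a ^ 2))
      = (√((c - 1) ^ 2 + 4 * c * a ^ 2) - (c - 1)) / (2 * a) := by
  have hD : c - 1 + √((c - 1) ^ 2 + 4 * c * a ^ 2) ≠ 0 := by
    linarith [one_sub_lt_sqrt ha hc]
  rw [div_eq_div_iff hD (mul_ne_zero two_ne_zero ha)]
  have hS := sq_sqrt (show 0 ≤ (c - 1) ^ 2 + 4 * c * a ^ 2 by positivity)
  linear_combination -hS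

lemma mul_sub_eq_mul_one_sub_mul {S : ℝ} (ha : a ≠ 0) (hS : S ^ 2 = (c - 1) ^ 2 + 4 * c * a ^ 2) :
    let R := (S - (c - 1)) / (2 * a)
    c * (R - a) = R * (1 - R * a) := by
  dsimp only
  field_simp
  linear_combination hS

end

/-- The change of parameter at the start of the proof of Theorem 1.3:
with `q = π/p`, `S = √(1 + c² + 2c cos 2q)` and `R = 2c cos q/(c − 1 + S)`,
one has `c − 1 + S > 0`, `cos q < R < sec q` and
`c (R − cos q) = R (1 − R cos q)`. -/
theorem change_of_parameter (p c : ℝ) (hp : 2 < p) (hc : 0 < c)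
    (q S R : ℝ) (hq : q = π / p)
    (hS : S = Real.sqrt (1 + c ^ 2 + 2 * c * Real.cos (2 * q)))
    (hR : R = 2 * c * Real.cos q / (c - 1 + S)) :
    0 < c - 1 + S ∧
    Real.cos q < R ∧
    R < 1 / Real.cos q ∧
    c * (R - Real.cos q) = R * (1 - R * Real.cos q) := by
  obtain ⟨ha0, ha1⟩ : cos q ∈ Ioo 0 1 := hq ▸ cos_pi_div_mem_Ioo hp
  have ha : cos q ≠ 0 := ha0.ne'
  have hsq : cos q ^ 2 < 1 := pow_lt_one₀ ha0.le ha1 two_ne_zero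
  rw [one_add_sq_add_two_mul_mul_cos_two_mul] at hS
  subst hS
  rw [two_mul_mul_div_eq_sub_div ha hc] at hR
  subst hR
  refine ⟨by linarith [one_sub_lt_sqrt ha hc], ?_, ?_,
    mul_sub_eq_mul_one_sub_mul ha (sq_sqrt (by positivity))⟩
  · rw [lt_div_iff₀ (by linarith)]
    linarith [sub_one_add_two_mul_sq_lt_sqrt (c := c) ha hsq]
  · rw [div_lt_div_iff₀ (by linarith) ha0]
    nlinarith [sqrt_lt_add_one hc hsq]
end
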